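/- Let (X,S) be an association scheme, (Y,T) a 3-equivalenced association scheme with |T| > 2, x₀ ∈ X, y₀ ∈ Y, and fix well-ordering enumerations of the sets y₀t (t ∈ T_3). Then the linear span of {G'_{y₀t, y₀t'} : t, t' ∈ T_3} is a two-sided ideal of the Terwilliger algebra T(S≀T) of the wreath product at (x₀,y₀), the matrices G'_{y₀t, y₀t'} satisfy G'_{y₀t, y₀t'} · G'_{y₀t''', y₀t''} = δ_{t', t'''} G'_{y₀t, y₀t''}, and the linear map sending G'_{y₀t, y₀t'} to the matrix unit E_{t,t'} is an algebra isomorphism from this span onto the full matrix algebra Mat_{T_3}(ℂ). -/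

import Mathlib

open Matrix BigOperators Kronecker
open scoped Classical

section Defs

variable {Z : Type*} [Fintype Z] [DecidableEq Z]

/-- The identity (diagonal) relation on `Z`. -/
def diagRel (Z : Type*) [Fintype Z] [DecidableEq Z] : Finset (Z × Z) :=
  Finset.univ.filter fun p => p.1 = p.2

/-- The converse relation. -/
def convRel (s : Finset (Z × Z)) : Finset (Z × Z) := s.image fun p => (p.2, p.1)

/-- The intersection number `p_{st}^u`, computed at an arbitrary pair of `u`. -/
noncomputable def pNum (s t u : Finset (Z × Z)) : ℕ :=
  if h : u.Nonempty then
    (Finset.univ.filter fun z => (h.choose.1, z) ∈ s ∧ (z, h.choose.2) ∈ t).card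
  else 0

/-- The valency `n_s = p_{s s*}^{1}`. -/
noncomputable def valency (s : Finset (Z × Z)) : ℕ := pNum s (convRel s) (diagRel Z)

/-- The adjacency matrix of a relation. -/
def adjMat (s : Finset (Z × Z)) : Matrix Z Z ℂ :=
  Matrix.of fun x y => if (x, y) ∈ s then 1 else 0

/-- The diagonal 0/1 matrix of a subset. -/
def eps (U : Finset Z) : Matrix Z Z ℂ := Matrix.diagonal fun i => if i ∈ U then 1 else 0

/-- The all-ones matrix. -/
def allOnes (Z : Type*) : Matrix Z Z ℂ := Matrix.of fun _ _ => 1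

/-- `pointFiber x s = xs = {y : (x,y) ∈ s}`. -/
def pointFiber (x : Z) (s : Finset (Z × Z)) : Finset Z :=
  Finset.univ.filter fun y => (x, y) ∈ s

/-- An association scheme on a finite set `Z`: a partition of `Z × Z` into nonempty
relations containing the identity relation, closed under converse, and with
well-defined intersection numbers. -/
structure AssocScheme (Z : Type*) [Fintype Z] [DecidableEq Z] where
  rels : Finset (Finset (Z × Z))
  nonempty_mem : ∀ s ∈ rels, s.Nonempty
  cover : ∀ p : Z × Z, ∃ s ∈ rels, p ∈ s
  pairwise_disjoint : ∀ s ∈ rels, ∀ t ∈ rels, s ≠ t → Disjoint s t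
  id_mem : diagRel Z ∈ rels
  conv_mem : ∀ s ∈ rels, convRel s ∈ rels
  pconst : ∀ s ∈ rels, ∀ t ∈ rels, ∀ u ∈ rels, ∀ p ∈ u, ∀ q ∈ u,
    (Finset.univ.filter fun z => (p.1, z) ∈ s ∧ (z, p.2) ∈ t).card =
    (Finset.univ.filter fun z => (q.1, z) ∈ s ∧ (z, q.2) ∈ t).card

/-- A scheme is 3-equivalenced when it has more than one point and every
non-identity basic relation has valency 3. -/
def ThreeEquivalenced (B : AssocScheme Z) : Prop :=
  1 < Fintype.card Z ∧ ∀ t ∈ B.rels, t ≠ diagRel Z → valency t = 3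

/-- A scheme is k-equivalenced when it has more than one point and every
non-identity basic relation has valency k. -/
def KEquivalenced (B : AssocScheme Z) (k : ℕ) : Prop :=
  1 < Fintype.card Z ∧ ∀ t ∈ B.rels, t ≠ diagRel Z → valency t = k

/-- A scheme is imprimitive if some union of basic relations is an equivalence
relation different from the identity relation and from the full relation. -/
def Imprimitive (B : AssocScheme Z) : Prop :=
  ∃ R ⊆ B.rels, Equivalence (fun x y : Z => (x, y) ∈ R.sup id) ∧
    R.sup id ≠ diagRel Z ∧ R.sup id ≠ Finset.univ

/-- A coherent algebra: a subalgebra of the matrix algebra containing the all-ones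
matrix (and the identity), closed under conjugate transpose and Hadamard product. -/
def IsCoherent (𝒜 : Subalgebra ℂ (Matrix Z Z ℂ)) : Prop :=
  allOnes Z ∈ 𝒜 ∧ (∀ M ∈ 𝒜, Mᴴ ∈ 𝒜) ∧
  ∀ M ∈ 𝒜, ∀ N ∈ 𝒜, Matrix.hadamard M N ∈ 𝒜

/-- The one-point-extension algebra: the smallest coherent algebra containing all
adjacency matrices of the scheme and the diagonal matrix unit at `x`. -/
noncomputable def onePointAlg (B : AssocScheme Z) (x : Z) : Subalgebra ℂ (Matrix Z Z ℂ) :=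
  sInf {𝒜 | IsCoherent 𝒜 ∧ (∀ s ∈ B.rels, adjMat s ∈ 𝒜) ∧ eps {x} ∈ 𝒜}

/-- A matrix has only 0/1 entries. -/
def IsZeroOne (M : Matrix Z Z ℂ) : Prop := ∀ i j, M i j = 0 ∨ M i j = 1

/-- A basic relation matrix of a coherent algebra: a nonzero 0/1 matrix in the
algebra whose only 0/1 minorants in the algebra are 0 and itself. -/
def IsBasicMatrix (𝒜 : Subalgebra ℂ (Matrix Z Z ℂ)) (B : Matrix Z Z ℂ) : Prop :=
  B ∈ 𝒜 ∧ IsZeroOne B ∧ B ≠ 0 ∧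
  ∀ C ∈ 𝒜, IsZeroOne C → (∀ i j, C i j = 1 → B i j = 1) → C = 0 ∨ C = B

/-- The Terwilliger algebra of a scheme with respect to the base point `x`. -/
noncomputable def terwAlg (B : AssocScheme Z) (x : Z) : Subalgebra ℂ (Matrix Z Z ℂ) :=
  Algebra.adjoin ℂ
    ({M | ∃ s ∈ B.rels, M = adjMat s} ∪ {M | ∃ s ∈ B.rels, M = eps (pointFiber x s)})

/-- A central primitive idempotent of a (set underlying a) matrix algebra: a nonzero
central idempotent that is not the sum of two nonzero orthogonal central idempotents. -/
def IsCPI {n : Type*} [Fintype n] [DecidableEq n] (𝒜 : Set (Matrix n n ℂ))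
    (e : Matrix n n ℂ) : Prop :=
  e ∈ 𝒜 ∧ e ≠ 0 ∧ e * e = e ∧ (∀ a ∈ 𝒜, a * e = e * a) ∧
  ¬∃ f g : Matrix n n ℂ, f ∈ 𝒜 ∧ g ∈ 𝒜 ∧ f ≠ 0 ∧ g ≠ 0 ∧
    f * f = f ∧ g * g = g ∧ (∀ a ∈ 𝒜, a * f = f * a) ∧ (∀ a ∈ 𝒜, a * g = g * a) ∧
    f * g = 0 ∧ g * f = 0 ∧ e = f + g

/-- The trivial central primitive idempotent
`∑_{s∈S} n_s⁻¹ ε_{x s} J ε_{x s}` of the Terwilliger algebra. -/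
noncomputable def trivTerwIdem (B : AssocScheme Z) (x : Z) : Matrix Z Z ℂ :=
  ∑ s ∈ B.rels, ((valency s : ℂ)⁻¹) •
    (eps (pointFiber x s) * allOnes Z * eps (pointFiber x s))

/-- The adjacency algebra `A(S) = span{σ_s : s ∈ S}` as a set of matrices. -/
def adjAlgSet (B : AssocScheme Z) : Set (Matrix Z Z ℂ) :=
  ↑(Submodule.span ℂ {M | ∃ s ∈ B.rels, M = adjMat s})

end Defs

section Wreath

variable {X Y : Type*} [Fintype X] [DecidableEq X] [Fintype Y] [DecidableEq Y]

/-- Generators of the Terwilliger algebra of the wreath product at `(x₀, y₀)`. -/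
def wreathGens (A : AssocScheme X) (B : AssocScheme Y) (x₀ : X) (y₀ : Y) :
    Set (Matrix (X × Y) (X × Y) ℂ) :=
  {M | ∃ s ∈ A.rels, M = adjMat s ⊗ₖ (1 : Matrix Y Y ℂ)} ∪
  {M | ∃ s ∈ A.rels, M = eps (pointFiber x₀ s) ⊗ₖ eps ({y₀} : Finset Y)} ∪
  {M | ∃ t ∈ B.rels, t ≠ diagRel Y ∧ M = allOnes X ⊗ₖ adjMat t} ∪
  {M | ∃ t ∈ B.rels, t ≠ diagRel Y ∧ M = (1 : Matrix X X ℂ) ⊗ₖ eps (pointFiber y₀ t)}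

/-- The Terwilliger algebra of the wreath product at `(x₀, y₀)`. -/
noncomputable def wreathTerw (A : AssocScheme X) (B : AssocScheme Y) (x₀ : X) (y₀ : Y) :
    Subalgebra ℂ (Matrix (X × Y) (X × Y) ℂ) :=
  Algebra.adjoin ℂ (wreathGens A B x₀ y₀)

/-- The relation `s̃` of the wreath product coming from `s ∈ S`. -/
def tildeRel (s : Finset (X × X)) : Finset ((X × Y) × (X × Y)) :=
  Finset.univ.filter fun p => (p.1.1, p.2.1) ∈ s ∧ p.1.2 = p.2.2

/-- The relation `t̄` of the wreath product coming from `t ∈ T \ {1}`. -/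
def barRel (t : Finset (Y × Y)) : Finset ((X × Y) × (X × Y)) :=
  Finset.univ.filter fun p => (p.1.2, p.2.2) ∈ t

/-- The basic relations of the wreath product `S ≀ T`. -/
def wreathRels (A : AssocScheme X) (B : AssocScheme Y) :
    Finset (Finset ((X × Y) × (X × Y))) :=
  A.rels.image (tildeRel (Y := Y)) ∪ (B.rels.erase (diagRel Y)).image (barRel (X := X))

/-- The trivial central primitive idempotent
`e₀ = ∑_u n_u⁻¹ ε_{(x₀,y₀)u} J ε_{(x₀,y₀)u}` of `T(S ≀ T)`. -/
noncomputable def wreathTriv (A : AssocScheme X) (B : AssocScheme Y) (x₀ : X) (y₀ : Y) :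
    Matrix (X × Y) (X × Y) ℂ :=
  ∑ u ∈ wreathRels A B, ((valency u : ℂ)⁻¹) •
    (eps (pointFiber (x₀, y₀) u) * allOnes (X × Y) * eps (pointFiber (x₀, y₀) u))

/-- `ω = e^{2πi/3}`. -/
noncomputable def omega3 : ℂ := Complex.exp (2 * Real.pi * Complex.I / 3)

/-- The shifted matching matrix `∑_i E_{y_{t(i)}, y_{t'(i+k)}}` on `y₀t × y₀t'`. -/
noncomputable def cyc (enum : Finset (Y × Y) → Fin 3 → Y) (t t' : Finset (Y × Y))
    (k : Fin 3) : Matrix Y Y ℂ :=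
  ∑ i : Fin 3, Matrix.single (enum t i) (enum t' (i + k)) 1

/-- `G_{y₀t, y₀t'}`. -/
noncomputable def Gmat (X : Type*) [Fintype X] (enum : Finset (Y × Y) → Fin 3 → Y)
    (t t' : Finset (Y × Y)) : Matrix (X × Y) (X × Y) ℂ :=
  ((3 * (Fintype.card X : ℂ))⁻¹) •
    (allOnes X ⊗ₖ (cyc enum t t' 0 + omega3 • cyc enum t t' 1 + omega3 ^ 2 • cyc enum t t' 2))

/-- `G'_{y₀t, y₀t'}`. -/
noncomputable def Gmat' (X : Type*) [Fintype X] (enum : Finset (Y × Y) → Fin 3 → Y)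
    (t t' : Finset (Y × Y)) : Matrix (X × Y) (X × Y) ℂ :=
  ((3 * (Fintype.card X : ℂ))⁻¹) •
    (allOnes X ⊗ₖ (cyc enum t t' 0 + omega3 ^ 2 • cyc enum t t' 1 + omega3 • cyc enum t t' 2))

/-- `enum` enumerates each set `y₀t` (for non-identity `t`) by `Fin 3`. -/
def IsEnum (B : AssocScheme Y) (y₀ : Y) (enum : Finset (Y × Y) → Fin 3 → Y) : Prop :=
  ∀ t ∈ B.rels, t ≠ diagRel Y →
    Function.Injective (enum t) ∧ ∀ y, y ∈ pointFiber y₀ t ↔ ∃ i, enum t i = y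

/-- The enumerations are well-ordering: every basic relation matrix of the
one-point-extension algebra which is nonzero on `y₀t × y₀t'` restricts there to one of
the cyclic permutation matrices `I, C, C²`. -/
def IsWellOrdering (B : AssocScheme Y) (y₀ : Y) (enum : Finset (Y × Y) → Fin 3 → Y) : Prop :=
  IsEnum B y₀ enum ∧
  ∀ t ∈ B.rels, t ≠ diagRel Y → ∀ t' ∈ B.rels, t' ≠ diagRel Y →
    ∀ M : Matrix Y Y ℂ, IsBasicMatrix (onePointAlg B y₀) M →
      (∃ i j : Fin 3, M (enum t i) (enum t' j) ≠ 0) →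
      ∃ k : Fin 3, ∀ i j : Fin 3,
        M (enum t i) (enum t' j) = if j = i + k then 1 else 0

/-- The set of all matrices `G_{y₀t, y₀t'}`, `t, t' ∈ T₃`. -/
noncomputable def GmatSet (X : Type*) [Fintype X] (B : AssocScheme Y)
    (enum : Finset (Y × Y) → Fin 3 → Y) : Set (Matrix (X × Y) (X × Y) ℂ) :=
  {M | ∃ t ∈ B.rels.erase (diagRel Y), ∃ t' ∈ B.rels.erase (diagRel Y), M = Gmat X enum t t'}

/-- The set of all matrices `G'_{y₀t, y₀t'}`, `t, t' ∈ T₃`. -/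
noncomputable def GmatSet' (X : Type*) [Fintype X] (B : AssocScheme Y)
    (enum : Finset (Y × Y) → Fin 3 → Y) : Set (Matrix (X × Y) (X × Y) ℂ) :=
  {M | ∃ t ∈ B.rels.erase (diagRel Y), ∃ t' ∈ B.rels.erase (diagRel Y), M = Gmat' X enum t t'}

/-- `e_{η1} = ∑_{t ∈ T₃} G_{y₀t, y₀t}`. -/
noncomputable def etaOne (X : Type*) [Fintype X] (B : AssocScheme Y)
    (enum : Finset (Y × Y) → Fin 3 → Y) : Matrix (X × Y) (X × Y) ℂ :=
  ∑ t ∈ B.rels.erase (diagRel Y), Gmat X enum t t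

/-- `e_{η2} = ∑_{t ∈ T₃} G'_{y₀t, y₀t}`. -/
noncomputable def etaTwo (X : Type*) [Fintype X] (B : AssocScheme Y)
    (enum : Finset (Y × Y) → Fin 3 → Y) : Matrix (X × Y) (X × Y) ℂ :=
  ∑ t ∈ B.rels.erase (diagRel Y), Gmat' X enum t t

end Wreath

/-!
Write `G'_{y₀t,y₀t'} = (3|X|)⁻¹ J ⊗ M_{t,t'}`, where `M_{t,t'}` carries the character
`χ : k ↦ ω^{2k}` of `ℤ/3` circulantly on the block `y₀t × y₀t'`. Because `J² = |X| J` and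
`M_{t,t'} M_{t',t''} = 3 M_{t,t''}`, the `G'` form a system of matrix units, which gives the
isomorphism with `Mat_{T₃}(ℂ)`.

For the ideal property it suffices to multiply by generators. `σ_s ⊗ I` acts on `J ⊗ M`
through the row sums of `σ_s`, `ε_{x₀s} ⊗ ε_{y₀}` kills it, and `I ⊗ ε_{y₀u}` selects a
block. For `J ⊗ σ_u`: `σ_u` is a 0/1 matrix of `A(T_{y₀})`, hence a sum of basic relation
matrices, so by the well-ordering each of its blocks on `y₀s × y₀t` is circulant. A circulant
block times `M_{t,t'}` is a multiple of `M_{s,t'}` (characters diagonalise convolution on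
`ℤ/3`), and the row of `y₀` contributes nothing since a nontrivial character sums to zero.
Right multiplication follows by transposition, which replaces `χ` by `χ⁻¹`.
-/

section MatrixUnits

variable {K A ι : Type*} [Field K] [Ring A] [Algebra K A] [Fintype ι] [DecidableEq ι]
  {E : ι → ι → A}

variable (E) in
def matrixUnitsMap : Matrix ι ι K →ₗ[K] A where
  toFun N := ∑ i, ∑ j, N i j • E i j
  map_add' N N' := by simp only [Matrix.add_apply, add_smul, Finset.sum_add_distrib]
  map_smul' c N := by
    simp only [Matrix.smul_apply, smul_eq_mul, mul_smul, Finset.smul_sum, RingHom.id_apply]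

omit [DecidableEq ι] in
lemma matrixUnitsMap_apply (N : Matrix ι ι K) :
    matrixUnitsMap E N = ∑ i, ∑ j, N i j • E i j := rfl

lemma matrixUnitsMap_single (i j : ι) : matrixUnitsMap E (single i j (1 : K)) = E i j := by
  simp [matrixUnitsMap_apply, Matrix.single_apply, ite_smul, ite_and]

variable (hE : ∀ i j k l, E i j * E k l = if j = k then E i l else 0)
include hE

lemma matrixUnit_mul_matrixUnitsMap (N : Matrix ι ι K) (i j : ι) :
    E i j * matrixUnitsMap E N = ∑ l, N j l • E i l := by
  simp [matrixUnitsMap_apply, Finset.mul_sum, hE]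

lemma matrixUnitsMap_mul (N N' : Matrix ι ι K) :
    matrixUnitsMap E (N * N') = matrixUnitsMap E N * matrixUnitsMap E N' := by
  simp only [matrixUnitsMap_apply N, Finset.sum_mul, smul_mul_assoc,
    matrixUnit_mul_matrixUnitsMap hE, Finset.smul_sum, smul_smul]
  simp only [matrixUnitsMap_apply, Matrix.mul_apply, Finset.sum_smul]
  exact Finset.sum_congr rfl fun i _ => Finset.sum_comm

lemma matrixUnit_mul_matrixUnitsMap_mul_matrixUnit (N : Matrix ι ι K) (i j : ι) :
    E i i * matrixUnitsMap E N * E j j = N i j • E i j := by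
  simp [matrixUnitsMap_apply, Finset.sum_mul, Finset.mul_sum, hE]

lemma matrixUnitsMap_injective (hne : ∀ i, E i i ≠ 0) :
    Function.Injective (matrixUnitsMap E : Matrix ι ι K → A) := by
  rw [← LinearMap.ker_eq_bot, LinearMap.ker_eq_bot']
  intro N hN
  ext i j
  have hij : E i j ≠ 0 := fun h => hne i (by simpa [h] using (hE i j j i).symm)
  have := matrixUnit_mul_matrixUnitsMap_mul_matrixUnit hE N i j
  rw [hN, mul_zero, zero_mul, eq_comm, smul_eq_zero] at this
  exact this.resolve_right hij

omit hE in
lemma range_matrixUnitsMap :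
    LinearMap.range (matrixUnitsMap E : Matrix ι ι K →ₗ[K] A) =
      Submodule.span K (Set.range (Function.uncurry E)) := by
  apply le_antisymm
  · rintro _ ⟨N, rfl⟩
    exact Submodule.sum_mem _ fun i _ => Submodule.sum_mem _ fun j _ =>
      Submodule.smul_mem _ _ (Submodule.subset_span ⟨(i, j), rfl⟩)
  · rw [Submodule.span_le]
    rintro _ ⟨⟨i, j⟩, rfl⟩
    exact ⟨single i j 1, matrixUnitsMap_single i j⟩

theorem exists_linearMap_matrixUnits (hne : ∀ i, E i i ≠ 0) :
    ∃ φ : A →ₗ[K] Matrix ι ι K,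
      (∀ i j, φ (E i j) = single i j 1) ∧
      Set.InjOn φ (Submodule.span K (Set.range (Function.uncurry E))) ∧
      φ '' (Submodule.span K (Set.range (Function.uncurry E))) = Set.univ ∧
      ∀ a ∈ Submodule.span K (Set.range (Function.uncurry E)),
        ∀ b ∈ Submodule.span K (Set.range (Function.uncurry E)), φ (a * b) = φ a * φ b := by
  obtain ⟨φ, hφ⟩ := (matrixUnitsMap (K := K) E).exists_leftInverse_of_injective
    (LinearMap.ker_eq_bot.2 (matrixUnitsMap_injective hE hne))
  have hφψ (N : Matrix ι ι K) : φ (matrixUnitsMap E N) = N := LinearMap.congr_fun hφ N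
  simp only [← range_matrixUnitsMap, LinearMap.mem_range, forall_exists_index,
    forall_apply_eq_imp_iff]
  refine ⟨φ, fun i j => ?_, ?_, ?_, fun N N' => ?_⟩
  · rw [← matrixUnitsMap_single (K := K) (E := E), hφψ]
  · rintro _ ⟨N, rfl⟩ _ ⟨N', rfl⟩ h
    rw [hφψ, hφψ] at h
    rw [h]
  · exact Set.eq_univ_of_forall fun N => ⟨_, ⟨N, rfl⟩, hφψ N⟩
  · rw [← matrixUnitsMap_mul hE, hφψ, hφψ, hφψ]

end MatrixUnits

section SpanStability

variable {R A : Type*} [CommSemiring R] [Semiring A] [Algebra R A] {S : Set A} {V : Submodule R A}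

lemma mul_mem_of_mem_span {a m : A} (h : ∀ x ∈ S, a * x ∈ V) (hm : m ∈ Submodule.span R S) :
    a * m ∈ V :=
  (Submodule.span_le (p := V.comap (LinearMap.mulLeft R a))).2 h hm

lemma mul_mem_of_mem_span' {a m : A} (h : ∀ x ∈ S, x * a ∈ V)
    (hm : m ∈ Submodule.span R S) :
    m * a ∈ V :=
  (Submodule.span_le (p := V.comap (LinearMap.mulRight R a))).2 h hm

lemma mul_mem_of_mem_adjoin (h : ∀ a ∈ S, ∀ m ∈ V, a * m ∈ V ∧ m * a ∈ V) {a : A}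
    (ha : a ∈ Algebra.adjoin R S) : ∀ m ∈ V, a * m ∈ V ∧ m * a ∈ V := by
  induction ha using Algebra.adjoin_induction with
  | mem a ha => exact h a ha
  | algebraMap r =>
    intro m hm
    rw [Algebra.algebraMap_eq_smul_one, smul_mul_assoc, one_mul, mul_smul_comm, mul_one]
    exact ⟨V.smul_mem r hm, V.smul_mem r hm⟩
  | add a b _ _ iha ihb =>
    intro m hm
    rw [add_mul, mul_add]
    exact ⟨V.add_mem (iha m hm).1 (ihb m hm).1, V.add_mem (iha m hm).2 (ihb m hm).2⟩
  | mul a b _ _ iha ihb =>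
    intro m hm
    rw [mul_assoc, ← mul_assoc m]
    exact ⟨(iha _ (ihb m hm).1).1, (ihb _ (iha m hm).2).2⟩

end SpanStability

section BasicMatrices

lemma isZeroOne_adjMat {Z : Type*} [DecidableEq Z] (u : Finset (Z × Z)) :
    IsZeroOne (adjMat u) := by
  intro i j
  by_cases h : (i, j) ∈ u <;> simp [adjMat, h]

lemma transpose_adjMat {Z : Type*} [DecidableEq Z] (u : Finset (Z × Z)) :
    (adjMat u)ᵀ = adjMat (convRel u) := by
  ext i j
  simp [adjMat, convRel]

variable {Z : Type*} [Fintype Z]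

noncomputable def onesSet (M : Matrix Z Z ℂ) : Finset (Z × Z) :=
  Finset.univ.filter fun p => M p.1 p.2 = 1

lemma mem_onesSet {M : Matrix Z Z ℂ} {p : Z × Z} : p ∈ onesSet M ↔ M p.1 p.2 = 1 := by
  simp [onesSet]

lemma IsZeroOne.ext {M N : Matrix Z Z ℂ} (hM : IsZeroOne M) (hN : IsZeroOne N)
    (h : onesSet M = onesSet N) : M = N := by
  ext i j
  have hij : M i j = 1 ↔ N i j = 1 := by simpa [mem_onesSet] using congrArg ((i, j) ∈ ·) h
  rcases hM i j with hm | hm <;> rcases hN i j with hn | hn <;> simp_all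

lemma IsZeroOne.sub {C D : Matrix Z Z ℂ} (hC : IsZeroOne C) (hD : IsZeroOne D)
    (hCD : onesSet C ⊆ onesSet D) :
    IsZeroOne (D - C) ∧ onesSet (D - C) ⊆ onesSet D ∧
      Disjoint (onesSet (D - C)) (onesSet C) := by
  have hle : ∀ i j, C i j = 1 → D i j = 1 := fun i j h =>
    mem_onesSet.1 (hCD (mem_onesSet (p := (i, j)) |>.2 h))
  refine ⟨fun i j => ?_, fun p hp => ?_, Finset.disjoint_left.2 fun p hp hpC => ?_⟩
  · rcases hC i j with h | h
    · simpa [h] using hD i j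
    · simp [h, hle i j h]
  · rw [mem_onesSet, Matrix.sub_apply] at hp
    rw [mem_onesSet]
    rcases hC p.1 p.2 with h | h <;> rcases hD p.1 p.2 with h' | h' <;> simp_all
  · rw [mem_onesSet, Matrix.sub_apply] at hp
    rw [mem_onesSet] at hpC
    rw [hpC, hle _ _ hpC, sub_self] at hp
    exact zero_ne_one hp

theorem mem_span_isBasicMatrix [DecidableEq Z] {𝒜 : Subalgebra ℂ (Matrix Z Z ℂ)}
    {D : Matrix Z Z ℂ} (hD : D ∈ 𝒜) (hzo : IsZeroOne D) :
    D ∈ Submodule.span ℂ {C | IsBasicMatrix 𝒜 C} := by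
  induction hn : (onesSet D).card using Nat.strong_induction_on generalizing D with
  | _ n ih =>
    by_cases hb : IsBasicMatrix 𝒜 D
    · exact Submodule.subset_span hb
    by_cases h0 : D = 0
    · rw [h0]; exact Submodule.zero_mem _
    obtain ⟨C, hC, hCzo, hCD, hC0, hCne⟩ :
        ∃ C ∈ 𝒜, IsZeroOne C ∧ onesSet C ⊆ onesSet D ∧ C ≠ 0 ∧ C ≠ D := by
      simp only [IsBasicMatrix, hD, hzo, true_and, not_and, not_forall, not_or] at hb
      obtain ⟨C, hC, hCzo, hle, hC0, hCne⟩ := hb h0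
      exact ⟨C, hC, hCzo, fun p hp => mem_onesSet.2 (hle _ _ (mem_onesSet.1 hp)), hC0, hCne⟩
    obtain ⟨hsubzo, hsub, hdisj⟩ := hCzo.sub hzo hCD
    have hC_lt : (onesSet C).card < n := hn ▸ Finset.card_lt_card
      (Finset.ssubset_iff_subset_ne.2 ⟨hCD, fun h => hCne (hCzo.ext hzo h)⟩)
    have hsub_lt : (onesSet (D - C)).card < n := by
      obtain ⟨p, hp⟩ : (onesSet C).Nonempty := by
        rw [Finset.nonempty_iff_ne_empty]
        intro h
        exact hC0 (hCzo.ext (fun _ _ => Or.inl rfl) (h.trans (by simp [onesSet])))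
      refine hn ▸ Finset.card_lt_card (Finset.ssubset_iff_subset_ne.2 ⟨hsub, fun h => ?_⟩)
      exact Finset.disjoint_left.1 hdisj (h ▸ hCD hp) hp
    rw [show D = C + (D - C) by abel]
    exact Submodule.add_mem _ (ih _ hC_lt hC hCzo rfl) (ih _ hsub_lt (sub_mem hD hC) hsubzo rfl)

end BasicMatrices

section Character

lemma omega3_isPrimitiveRoot : IsPrimitiveRoot omega3 3 := by
  simpa [omega3] using Complex.isPrimitiveRoot_exp 3 (by norm_num)

/-- The values `1, ω², ω` at `0, 1, 2` are the coefficients in `G'`. -/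
noncomputable def omegaChar : AddChar (Fin 3) ℂ where
  toFun k := (omega3 ^ 2) ^ (k : ℕ)
  map_zero_eq_one' := pow_zero _
  map_add_eq_mul' a b := by
    have h : (omega3 ^ 2) ^ 3 = 1 := by
      rw [← pow_mul, mul_comm, pow_mul, omega3_isPrimitiveRoot.pow_eq_one, one_pow]
    rw [Fin.val_add, ← pow_eq_pow_mod _ h, pow_add]

lemma omegaChar_zero : omegaChar 0 = 1 := AddChar.map_zero_eq_one _

lemma omegaChar_one : omegaChar 1 = omega3 ^ 2 := pow_one _

lemma omegaChar_two : omegaChar 2 = omega3 := by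
  change (omega3 ^ 2) ^ 2 = omega3
  rw [← pow_mul, show 2 * 2 = 3 + 1 by rfl, pow_succ, omega3_isPrimitiveRoot.pow_eq_one, one_mul]

lemma omegaChar_ne_one : omegaChar ≠ 1 :=
  AddChar.ne_one_iff.2 ⟨1, omegaChar_one ▸
    omega3_isPrimitiveRoot.pow_ne_one_of_pos_of_lt two_ne_zero (by norm_num)⟩

variable {G R : Type*} [AddCommGroup G] [Fintype G] [CommRing R]

lemma AddChar.sum_apply_sub_eq_zero [IsDomain R] {χ : AddChar G R} (hχ : χ ≠ 1) (m : G) :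
    ∑ j, χ (m - j) = 0 := by
  rw [← AddChar.sum_eq_zero_of_ne_one hχ]
  exact Fintype.sum_equiv (Equiv.subLeft m) _ _ fun _ => rfl

lemma AddChar.sum_mul_apply_sub (χ : AddChar G R) (g : G → R) (i m : G) :
    ∑ j, g (j - i) * χ (m - j) = (∑ d, g d * χ (-d)) * χ (m - i) := by
  rw [Finset.sum_mul]
  refine Fintype.sum_equiv (Equiv.subRight i) _ _ fun j => ?_
  rw [Equiv.subRight_apply, mul_assoc, ← AddChar.map_add_eq_mul]
  congr 2
  abel

end Character

section CircBlock

variable {Y : Type*} [DecidableEq Y] {enum : Finset (Y × Y) → Fin 3 → Y}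
  {t t' t'' u : Finset (Y × Y)}

variable (enum) in
noncomputable def circBlock (g : Fin 3 → ℂ) (t t' : Finset (Y × Y)) : Matrix Y Y ℂ :=
  ∑ k, g k • cyc enum t t' k

lemma circBlock_eq_sum_single (g : Fin 3 → ℂ) (t t' : Finset (Y × Y)) :
    circBlock enum g t t' = ∑ i, ∑ j, g (j - i) • single (enum t i) (enum t' j) 1 := by
  simp only [circBlock, cyc, Finset.smul_sum]
  rw [Finset.sum_comm]
  exact Finset.sum_congr rfl fun i _ => Fintype.sum_equiv (Equiv.addLeft i) _ _ fun k => by simp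

lemma circBlock_apply (hinj : Function.Injective (enum t)) (hinj' : Function.Injective (enum t'))
    (g : Fin 3 → ℂ) (i j : Fin 3) :
    circBlock enum g t t' (enum t i) (enum t' j) = g (j - i) := by
  simp [circBlock_eq_sum_single, Matrix.sum_apply, Matrix.single_apply, hinj.eq_iff,
    hinj'.eq_iff, ite_and]

lemma circBlock_apply_of_notMem_left {y : Y} (hy : y ∉ Set.range (enum t)) (g : Fin 3 → ℂ)
    (y' : Y) : circBlock enum g t t' y y' = 0 := by
  simp only [circBlock_eq_sum_single, Matrix.sum_apply, Matrix.smul_apply, Matrix.single_apply]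
  exact Finset.sum_eq_zero fun i _ => Finset.sum_eq_zero fun j _ => by
    simp [show enum t i ≠ y from fun h => hy ⟨i, h⟩]

lemma circBlock_apply_of_notMem_right {y' : Y} (hy' : y' ∉ Set.range (enum t'))
    (g : Fin 3 → ℂ) (y : Y) : circBlock enum g t t' y y' = 0 := by
  simp only [circBlock_eq_sum_single, Matrix.sum_apply, Matrix.smul_apply, Matrix.single_apply]
  exact Finset.sum_eq_zero fun i _ => Finset.sum_eq_zero fun j _ => by
    simp [show enum t' j ≠ y' from fun h => hy' ⟨j, h⟩]

lemma transpose_circBlock (g : Fin 3 → ℂ) :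
    (circBlock enum g t t')ᵀ = circBlock enum (fun k => g (-k)) t' t := by
  simp only [circBlock_eq_sum_single, Matrix.transpose_sum, Matrix.transpose_smul,
    Matrix.transpose_single, neg_sub]
  exact Finset.sum_comm

lemma mul_circBlock_apply [Fintype Y] (hinj' : Function.Injective (enum t')) (M : Matrix Y Y ℂ)
    (g : Fin 3 → ℂ) (y : Y) (m : Fin 3) :
    (M * circBlock enum g t t') y (enum t' m) = ∑ j, M y (enum t j) * g (m - j) := by
  simp only [Matrix.mul_apply, circBlock_eq_sum_single, Matrix.sum_apply, Matrix.smul_apply,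
    Matrix.single_apply, hinj'.eq_iff, Finset.mul_sum]
  rw [Finset.sum_comm]
  simp [ite_and]

lemma mul_circBlock_apply_of_notMem [Fintype Y] {y' : Y} (hy' : y' ∉ Set.range (enum t'))
    (M : Matrix Y Y ℂ) (g : Fin 3 → ℂ) (y : Y) : (M * circBlock enum g t t') y y' = 0 := by
  simp [Matrix.mul_apply, circBlock_apply_of_notMem_right hy']

lemma cyc_mul_cyc [Fintype Y] (hinj : Function.Injective (enum t')) (k l : Fin 3) :
    cyc enum t t' k * cyc enum t' t'' l = cyc enum t t'' (k + l) := by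
  simp only [cyc, Finset.sum_mul_sum]
  refine Finset.sum_congr rfl fun i _ => ?_
  rw [Finset.sum_eq_single (i + k)
      (fun j _ hj => single_mul_single_of_ne (h := fun h => hj (hinj h).symm) ..) (by simp),
    single_mul_single_same, mul_one, add_assoc]

lemma cyc_mul_cyc_of_disjoint [Fintype Y] (h : ∀ i j, enum t' i ≠ enum u j) (k l : Fin 3) :
    cyc enum t t' k * cyc enum u t'' l = 0 := by
  simp only [cyc, Finset.sum_mul_sum]
  exact Finset.sum_eq_zero fun i _ => Finset.sum_eq_zero fun j _ =>
    single_mul_single_of_ne (h := h _ _) ..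

lemma circBlock_mul_circBlock [Fintype Y] (hinj : Function.Injective (enum t')) (g : Fin 3 → ℂ)
    (χ : AddChar (Fin 3) ℂ) :
    circBlock enum g t t' * circBlock enum χ t' t'' =
      (∑ d, g d * χ (-d)) • circBlock enum χ t t'' := by
  simp only [circBlock, Finset.sum_mul_sum, smul_mul_smul_comm, cyc_mul_cyc hinj, Finset.smul_sum,
    smul_smul]
  simp only [Finset.sum_mul, Finset.sum_smul]
  conv_rhs => rw [Finset.sum_comm]
  refine Finset.sum_congr rfl fun k _ => ?_
  refine Fintype.sum_equiv (Equiv.addLeft k) _ _ fun l => ?_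
  simp only [Equiv.coe_addLeft]
  rw [mul_assoc, ← AddChar.map_add_eq_mul, neg_add_cancel_left]

lemma circBlock_mul_circBlock_of_disjoint [Fintype Y] {g h : Fin 3 → ℂ}
    (hdisj : ∀ i j, enum t' i ≠ enum u j) :
    circBlock enum g t t' * circBlock enum h u t'' = 0 := by
  simp only [circBlock, Finset.sum_mul_sum, smul_mul_smul_comm, cyc_mul_cyc_of_disjoint hdisj,
    smul_zero, Finset.sum_const_zero]

lemma eps_mul_circBlock_of_forall_mem [Fintype Y] {U : Finset Y} (h : ∀ i, enum t i ∈ U)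
    (g : Fin 3 → ℂ) : eps U * circBlock enum g t t' = circBlock enum g t t' := by
  ext y y'
  by_cases hy : y ∈ U
  · simp [eps, hy]
  · have hy' : y ∉ Set.range (enum t) := by rintro ⟨i, rfl⟩; exact hy (h i)
    simp [eps, hy, circBlock_apply_of_notMem_left hy']

lemma eps_mul_circBlock_of_forall_notMem [Fintype Y] {U : Finset Y} (h : ∀ i, enum t i ∉ U)
    (g : Fin 3 → ℂ) : eps U * circBlock enum g t t' = 0 := by
  ext y y'
  by_cases hy : y ∈ U
  · have hy' : y ∉ Set.range (enum t) := by rintro ⟨i, rfl⟩; exact h i hy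
    simp [eps, hy, circBlock_apply_of_notMem_left hy']
  · simp [eps, hy]

lemma circBlock_mul_eps_of_forall_mem [Fintype Y] {U : Finset Y} (h : ∀ i, enum t' i ∈ U)
    (g : Fin 3 → ℂ) : circBlock enum g t t' * eps U = circBlock enum g t t' := by
  ext y y'
  by_cases hy : y' ∈ U
  · simp [eps, hy]
  · have hy'' : y' ∉ Set.range (enum t') := by rintro ⟨i, rfl⟩; exact hy (h i)
    simp [eps, hy, circBlock_apply_of_notMem_right hy'']

lemma circBlock_mul_eps_of_forall_notMem [Fintype Y] {U : Finset Y} (h : ∀ i, enum t' i ∉ U)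
    (g : Fin 3 → ℂ) : circBlock enum g t t' * eps U = 0 := by
  ext y y'
  by_cases hy : y' ∈ U
  · have hy'' : y' ∉ Set.range (enum t') := by rintro ⟨i, rfl⟩; exact h i hy
    simp [eps, hy, circBlock_apply_of_notMem_right hy'']
  · simp [eps, hy]

end CircBlock

section Enumeration

variable {Y : Type*} [Fintype Y] [DecidableEq Y] {B : AssocScheme Y} {y₀ : Y}
  {enum : Finset (Y × Y) → Fin 3 → Y} {s t u : Finset (Y × Y)}

lemma AssocScheme.eq_of_mem_of_mem (hs : s ∈ B.rels) (ht : t ∈ B.rels) {p : Y × Y}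
    (hps : p ∈ s) (hpt : p ∈ t) : s = t :=
  by_contra fun h => Finset.disjoint_left.1 (B.pairwise_disjoint s hs t ht h) hps hpt

namespace IsEnum

variable (hE : IsEnum B y₀ enum)
include hE

lemma injective (ht : t ∈ B.rels.erase (diagRel Y)) : Function.Injective (enum t) :=
  (hE t (Finset.mem_of_mem_erase ht) (Finset.ne_of_mem_erase ht)).1

lemma mem_rel_iff (hu : u ∈ B.rels) (ht : t ∈ B.rels.erase (diagRel Y)) (i : Fin 3) :
    (y₀, enum t i) ∈ u ↔ u = t := by
  have hmem : (y₀, enum t i) ∈ t := by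
    simpa [pointFiber] using
      ((hE t (Finset.mem_of_mem_erase ht) (Finset.ne_of_mem_erase ht)).2 _).2 ⟨i, rfl⟩
  exact ⟨fun h => B.eq_of_mem_of_mem hu (Finset.mem_of_mem_erase ht) h hmem,
    fun h => h ▸ hmem⟩

lemma enum_ne_enum (hs : s ∈ B.rels.erase (diagRel Y)) (ht : t ∈ B.rels.erase (diagRel Y))
    (hst : s ≠ t) (i j : Fin 3) : enum s i ≠ enum t j := fun h =>
  hst ((hE.mem_rel_iff (Finset.mem_of_mem_erase hs) ht j).1 (h ▸ (hE.mem_rel_iff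
    (Finset.mem_of_mem_erase hs) hs i).2 rfl))

lemma enum_ne_basepoint (ht : t ∈ B.rels.erase (diagRel Y)) (i : Fin 3) : enum t i ≠ y₀ :=
  fun h => Finset.ne_of_mem_erase ht ((hE.mem_rel_iff B.id_mem ht i).1 (by simp [diagRel, h])).symm

lemma exists_enum_eq {y : Y} (hy : y ≠ y₀) :
    ∃ s ∈ B.rels.erase (diagRel Y), ∃ i, enum s i = y := by
  obtain ⟨s, hs, hys⟩ := B.cover (y₀, y)
  have hsd : s ≠ diagRel Y := by
    rintro rfl
    simp [diagRel] at hys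
    exact hy hys.symm
  obtain ⟨i, hi⟩ := ((hE s hs hsd).2 y).1 (by simpa [pointFiber] using hys)
  exact ⟨s, Finset.mem_erase.2 ⟨hsd, hs⟩, i, hi⟩

end IsEnum

end Enumeration

section Circulance

variable {Y : Type*} [Fintype Y] [DecidableEq Y] {B : AssocScheme Y} {y₀ : Y}
  {enum : Finset (Y × Y) → Fin 3 → Y} {s t u : Finset (Y × Y)}

def circulantOn (e e' : Fin 3 → Y) : Submodule ℂ (Matrix Y Y ℂ) where
  carrier := {M | ∃ g : Fin 3 → ℂ, ∀ i j, M (e i) (e' j) = g (j - i)}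
  add_mem' := by
    rintro _ _ ⟨g, hg⟩ ⟨h, hh⟩
    exact ⟨g + h, fun i j => by simp [hg, hh]⟩
  zero_mem' := ⟨0, fun _ _ => rfl⟩
  smul_mem' := by
    rintro c _ ⟨g, hg⟩
    exact ⟨c • g, fun i j => by simp [hg]⟩

lemma adjMat_mem_onePointAlg (hu : u ∈ B.rels) : adjMat u ∈ onePointAlg B y₀ :=
  Algebra.mem_sInf.2 fun _ h => h.2.1 u hu

namespace IsWellOrdering

variable (hwo : IsWellOrdering B y₀ enum)
include hwo

lemma mem_circulantOn_of_isBasicMatrix (hs : s ∈ B.rels.erase (diagRel Y))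
    (ht : t ∈ B.rels.erase (diagRel Y)) {C : Matrix Y Y ℂ}
    (hC : IsBasicMatrix (onePointAlg B y₀) C) : C ∈ circulantOn (enum s) (enum t) := by
  by_cases h : ∃ i j, C (enum s i) (enum t j) ≠ 0
  · obtain ⟨k, hk⟩ := hwo.2 s (Finset.mem_of_mem_erase hs) (Finset.ne_of_mem_erase hs) t
      (Finset.mem_of_mem_erase ht) (Finset.ne_of_mem_erase ht) C hC h
    exact ⟨fun d => if d = k then 1 else 0, fun i j => by simp [hk, sub_eq_iff_eq_add']⟩
  · simp only [not_exists, not_not] at h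
    exact ⟨0, h⟩

lemma adjMat_mem_circulantOn (hu : u ∈ B.rels) (hs : s ∈ B.rels.erase (diagRel Y))
    (ht : t ∈ B.rels.erase (diagRel Y)) : adjMat u ∈ circulantOn (enum s) (enum t) :=
  Submodule.span_le.2 (fun _ hC => hwo.mem_circulantOn_of_isBasicMatrix hs ht hC)
    (mem_span_isBasicMatrix (adjMat_mem_onePointAlg hu) (isZeroOne_adjMat u))

end IsWellOrdering

end Circulance

section BlockAction

variable {Y : Type*} [Fintype Y] [DecidableEq Y] {B : AssocScheme Y} {y₀ : Y}
  {enum : Finset (Y × Y) → Fin 3 → Y} {t t' u : Finset (Y × Y)}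

lemma IsEnum.adjMat_mul_circBlock (hE : IsEnum B y₀ enum) {χ : AddChar (Fin 3) ℂ}
    (hχ : χ ≠ 1) (hu : u ∈ B.rels) (ht : t ∈ B.rels.erase (diagRel Y))
    (ht' : t' ∈ B.rels.erase (diagRel Y)) {g : Finset (Y × Y) → Fin 3 → ℂ}
    (hg : ∀ s ∈ B.rels.erase (diagRel Y), ∀ i j,
      adjMat u (enum s i) (enum t j) = g s (j - i)) :
    adjMat u * circBlock enum χ t t' =
      ∑ s ∈ B.rels.erase (diagRel Y), (∑ d, g s d * χ (-d)) • circBlock enum χ s t' := by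
  ext y y'
  rw [Matrix.sum_apply]
  by_cases hy' : y' ∈ Set.range (enum t')
  swap
  · simp [mul_circBlock_apply_of_notMem hy', circBlock_apply_of_notMem_right hy']
  obtain ⟨m, rfl⟩ := hy'
  rw [mul_circBlock_apply (hE.injective ht')]
  by_cases hy : y = y₀
  · subst hy
    simp only [adjMat, Matrix.of_apply, hE.mem_rel_iff hu ht, ← Finset.mul_sum,
      AddChar.sum_apply_sub_eq_zero hχ, mul_zero]
    refine (Finset.sum_eq_zero fun s hs => ?_).symm
    rw [Matrix.smul_apply, circBlock_apply_of_notMem_left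
      (fun ⟨i, hi⟩ => hE.enum_ne_basepoint hs i hi), smul_zero]
  obtain ⟨s, hs, i, rfl⟩ := hE.exists_enum_eq hy
  rw [Finset.sum_eq_single_of_mem s hs fun s' hs' hne => by
    rw [Matrix.smul_apply, circBlock_apply_of_notMem_left
      (fun ⟨j, hj⟩ => hE.enum_ne_enum hs' hs hne j i hj), smul_zero]]
  simp only [hg s hs, AddChar.sum_mul_apply_sub, Matrix.smul_apply,
    circBlock_apply (hE.injective hs) (hE.injective ht'), smul_eq_mul]

end BlockAction

section CircBlockSpan

variable {Y : Type*} [Fintype Y] [DecidableEq Y] {B : AssocScheme Y} {y₀ : Y}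
  {enum : Finset (Y × Y) → Fin 3 → Y} {χ : AddChar (Fin 3) ℂ} {t t' u : Finset (Y × Y)}

variable (B enum χ) in
noncomputable def circBlockSpan : Submodule ℂ (Matrix Y Y ℂ) :=
  Submodule.span ℂ {M | ∃ t ∈ B.rels.erase (diagRel Y), ∃ t' ∈ B.rels.erase (diagRel Y),
    M = circBlock enum χ t t'}

lemma circBlock_mem_circBlockSpan (ht : t ∈ B.rels.erase (diagRel Y))
    (ht' : t' ∈ B.rels.erase (diagRel Y)) : circBlock enum χ t t' ∈ circBlockSpan B enum χ :=
  Submodule.subset_span ⟨t, ht, t', ht', rfl⟩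

namespace IsWellOrdering

variable (hwo : IsWellOrdering B y₀ enum)
include hwo

lemma exists_adjMat_mul_circBlock (hχ : χ ≠ 1) (hu : u ∈ B.rels)
    (ht : t ∈ B.rels.erase (diagRel Y)) (ht' : t' ∈ B.rels.erase (diagRel Y)) :
    ∃ c : Finset (Y × Y) → ℂ, adjMat u * circBlock enum χ t t' =
      ∑ s ∈ B.rels.erase (diagRel Y), c s • circBlock enum χ s t' := by
  choose! g hg using fun s (hs : s ∈ B.rels.erase (diagRel Y)) =>
    hwo.adjMat_mem_circulantOn hu hs ht
  exact ⟨_, hwo.1.adjMat_mul_circBlock hχ hu ht ht' hg⟩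

/-- Right multiplication is left multiplication by the converse relation, transposed; transposing
replaces `χ` by `χ⁻¹`. -/
lemma exists_circBlock_mul_adjMat (hχ : χ ≠ 1) (hu : u ∈ B.rels)
    (ht : t ∈ B.rels.erase (diagRel Y)) (ht' : t' ∈ B.rels.erase (diagRel Y)) :
    ∃ c : Finset (Y × Y) → ℂ, circBlock enum χ t t' * adjMat u =
      ∑ s ∈ B.rels.erase (diagRel Y), c s • circBlock enum χ t s := by
  obtain ⟨c, hc⟩ := hwo.exists_adjMat_mul_circBlock (inv_ne_one.2 hχ) (B.conv_mem u hu) ht' ht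
  refine ⟨c, ?_⟩
  rw [← Matrix.transpose_transpose (circBlock enum χ t t' * adjMat u), Matrix.transpose_mul,
    transpose_adjMat, transpose_circBlock]
  change (adjMat (convRel u) * circBlock enum (⇑χ⁻¹) t' t)ᵀ = _
  simp only [hc, Matrix.transpose_sum, Matrix.transpose_smul, transpose_circBlock,
    AddChar.inv_apply, neg_neg]

lemma mul_mem_circBlockSpan (hχ : χ ≠ 1) (hu : u ∈ B.rels) {N : Matrix Y Y ℂ}
    (hN : N ∈ circBlockSpan B enum χ) :
    adjMat u * N ∈ circBlockSpan B enum χ ∧ N * adjMat u ∈ circBlockSpan B enum χ := by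
  refine ⟨mul_mem_of_mem_span ?_ hN, mul_mem_of_mem_span' ?_ hN⟩ <;>
    rintro _ ⟨t, ht, t', ht', rfl⟩
  · obtain ⟨c, hc⟩ := hwo.exists_adjMat_mul_circBlock hχ hu ht ht'
    rw [hc]
    exact Submodule.sum_mem _ fun s hs =>
      Submodule.smul_mem _ _ (circBlock_mem_circBlockSpan hs ht')
  · obtain ⟨c, hc⟩ := hwo.exists_circBlock_mul_adjMat hχ hu ht ht'
    rw [hc]
    exact Submodule.sum_mem _ fun s hs =>
      Submodule.smul_mem _ _ (circBlock_mem_circBlockSpan ht hs)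

end IsWellOrdering

namespace IsEnum

variable (hE : IsEnum B y₀ enum)
include hE

lemma eps_pointFiber_mul_mem_circBlockSpan (hu : u ∈ B.rels) {N : Matrix Y Y ℂ}
    (hN : N ∈ circBlockSpan B enum χ) :
    eps (pointFiber y₀ u) * N ∈ circBlockSpan B enum χ ∧
      N * eps (pointFiber y₀ u) ∈ circBlockSpan B enum χ := by
  have hmem {s} (hs : s ∈ B.rels.erase (diagRel Y)) (i : Fin 3) :
      enum s i ∈ pointFiber y₀ u ↔ u = s := by
    simp [pointFiber, hE.mem_rel_iff hu hs]
  refine ⟨mul_mem_of_mem_span ?_ hN, mul_mem_of_mem_span' ?_ hN⟩ <;>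
    rintro _ ⟨t, ht, t', ht', rfl⟩
  · by_cases hut : u = t
    · rw [eps_mul_circBlock_of_forall_mem fun i => (hmem ht i).2 hut]
      exact circBlock_mem_circBlockSpan ht ht'
    · rw [eps_mul_circBlock_of_forall_notMem fun i h => hut ((hmem ht i).1 h)]
      exact Submodule.zero_mem _
  · by_cases hut : u = t'
    · rw [circBlock_mul_eps_of_forall_mem fun i => (hmem ht' i).2 hut]
      exact circBlock_mem_circBlockSpan ht ht'
    · rw [circBlock_mul_eps_of_forall_notMem fun i h => hut ((hmem ht' i).1 h)]
      exact Submodule.zero_mem _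

lemma eps_basepoint_mul_eq_zero {N : Matrix Y Y ℂ} (hN : N ∈ circBlockSpan B enum χ) :
    eps {y₀} * N = 0 ∧ N * eps {y₀} = 0 := by
  have hne {s} (hs : s ∈ B.rels.erase (diagRel Y)) (i : Fin 3) :
      enum s i ∉ ({y₀} : Finset Y) :=
    fun h => hE.enum_ne_basepoint hs i (Finset.mem_singleton.1 h)
  refine ⟨Submodule.mem_bot ℂ |>.1 (mul_mem_of_mem_span ?_ hN),
    Submodule.mem_bot ℂ |>.1 (mul_mem_of_mem_span' ?_ hN)⟩ <;>
    rintro _ ⟨t, ht, t', ht', rfl⟩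
  · exact (Submodule.mem_bot ℂ).2 (eps_mul_circBlock_of_forall_notMem (hne ht) _)
  · exact (Submodule.mem_bot ℂ).2 (circBlock_mul_eps_of_forall_notMem (hne ht') _)

end IsEnum

end CircBlockSpan

section RowSums

lemma allOnes_mul_allOnes {X : Type*} [Fintype X] :
    allOnes X * allOnes X = (Fintype.card X : ℂ) • allOnes X := by
  ext
  simp [allOnes, Matrix.mul_apply]

variable {X : Type*} [Fintype X] [DecidableEq X] {s : Finset (X × X)}

lemma AssocScheme.card_filter_mem_eq (A : AssocScheme X) (hs : s ∈ A.rels) (x x' : X) :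
    (Finset.univ.filter fun z => (x, z) ∈ s).card =
      (Finset.univ.filter fun z => (x', z) ∈ s).card := by
  simpa [convRel, diagRel] using A.pconst s hs (convRel s) (A.conv_mem s hs) (diagRel X) A.id_mem
    (x, x) (by simp [diagRel]) (x', x') (by simp [diagRel])

lemma AssocScheme.exists_adjMat_mul_allOnes (A : AssocScheme X) (hs : s ∈ A.rels) :
    ∃ c : ℂ, adjMat s * allOnes X = c • allOnes X := by
  rcases isEmpty_or_nonempty X with hX | ⟨⟨x₀⟩⟩
  · exact ⟨0, Subsingleton.elim _ _⟩
  refine ⟨(Finset.univ.filter fun z => (x₀, z) ∈ s).card, ?_⟩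
  ext x x'
  simp [adjMat, allOnes, Matrix.mul_apply, Finset.sum_boole, A.card_filter_mem_eq hs x x₀]

lemma AssocScheme.exists_allOnes_mul_adjMat (A : AssocScheme X) (hs : s ∈ A.rels) :
    ∃ c : ℂ, allOnes X * adjMat s = c • allOnes X := by
  obtain ⟨c, hc⟩ := A.exists_adjMat_mul_allOnes (A.conv_mem s hs)
  have hJ : (allOnes X)ᵀ = allOnes X := rfl
  refine ⟨c, ?_⟩
  rw [← Matrix.transpose_transpose (allOnes X * adjMat s), Matrix.transpose_mul, hJ,
    transpose_adjMat, hc, Matrix.transpose_smul, hJ]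

end RowSums

section GMatrices

lemma Gmat'_eq {X Y : Type*} [Fintype X] [DecidableEq Y] {enum : Finset (Y × Y) → Fin 3 → Y}
    (t t' : Finset (Y × Y)) :
    Gmat' X enum t t' =
      allOnes X ⊗ₖ ((3 * (Fintype.card X : ℂ))⁻¹ • circBlock enum omegaChar t t') := by
  rw [Gmat', kronecker_smul, circBlock, Fin.sum_univ_three, omegaChar_zero, omegaChar_one,
    omegaChar_two, one_smul]

variable {X Y : Type*} [Fintype X] [Fintype Y] [DecidableEq Y]
  {B : AssocScheme Y} {y₀ : Y} {enum : Finset (Y × Y) → Fin 3 → Y}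

variable (X B enum) in
noncomputable def allOnesKroneckerSpan : Submodule ℂ (Matrix (X × Y) (X × Y) ℂ) :=
  (circBlockSpan B enum omegaChar).map (kroneckerBilinear (R := ℂ) (allOnes X))

omit [Fintype X] in
lemma allOnes_kronecker_mem {N : Matrix Y Y ℂ} (hN : N ∈ circBlockSpan B enum omegaChar) :
    allOnes X ⊗ₖ N ∈ allOnesKroneckerSpan X B enum :=
  ⟨N, hN, rfl⟩

lemma span_GmatSet'_eq (hX : (Fintype.card X : ℂ) ≠ 0) :
    Submodule.span ℂ (GmatSet' X B enum) = allOnesKroneckerSpan X B enum := by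
  apply le_antisymm
  · rw [Submodule.span_le]
    rintro _ ⟨t, ht, t', ht', rfl⟩
    rw [Gmat'_eq]
    exact allOnes_kronecker_mem (Submodule.smul_mem _ _ (circBlock_mem_circBlockSpan ht ht'))
  · rw [allOnesKroneckerSpan, Submodule.map_le_iff_le_comap, circBlockSpan, Submodule.span_le]
    rintro _ ⟨t, ht, t', ht', rfl⟩
    have h : allOnes X ⊗ₖ circBlock enum omegaChar t t' =
        (3 * (Fintype.card X : ℂ)) • Gmat' X enum t t' := by
      rw [Gmat'_eq, kronecker_smul, smul_smul, mul_inv_cancel₀ (mul_ne_zero three_ne_zero hX),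
        one_smul]
    rw [SetLike.mem_coe, Submodule.mem_comap]
    change allOnes X ⊗ₖ circBlock enum omegaChar t t' ∈ _
    rw [h]
    exact Submodule.smul_mem _ _ (Submodule.subset_span ⟨t, ht, t', ht', rfl⟩)

lemma IsWellOrdering.wreathGens_mul_mem [DecidableEq X] {A : AssocScheme X} {x₀ : X}
    (hwo : IsWellOrdering B y₀ enum) {a : Matrix (X × Y) (X × Y) ℂ}
    (ha : a ∈ wreathGens A B x₀ y₀) {N : Matrix Y Y ℂ}
    (hN : N ∈ circBlockSpan B enum omegaChar) :
    a * (allOnes X ⊗ₖ N) ∈ allOnesKroneckerSpan X B enum ∧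
      (allOnes X ⊗ₖ N) * a ∈ allOnesKroneckerSpan X B enum := by
  rcases ha with ((⟨s, hs, rfl⟩ | ⟨s, hs, rfl⟩) | ⟨u, hu, -, rfl⟩) | ⟨u, hu, -, rfl⟩ <;>
    simp only [← mul_kronecker_mul]
  · obtain ⟨c, hc⟩ := A.exists_adjMat_mul_allOnes hs
    obtain ⟨c', hc'⟩ := A.exists_allOnes_mul_adjMat hs
    rw [hc, hc', one_mul, mul_one, smul_kronecker, smul_kronecker]
    exact ⟨Submodule.smul_mem _ _ (allOnes_kronecker_mem hN),
      Submodule.smul_mem _ _ (allOnes_kronecker_mem hN)⟩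
  · obtain ⟨h, h'⟩ := hwo.1.eps_basepoint_mul_eq_zero hN
    rw [h, h', kronecker_zero, kronecker_zero]
    exact ⟨Submodule.zero_mem _, Submodule.zero_mem _⟩
  · obtain ⟨h, h'⟩ := hwo.mul_mem_circBlockSpan omegaChar_ne_one hu hN
    rw [allOnes_mul_allOnes, smul_kronecker, smul_kronecker]
    exact ⟨Submodule.smul_mem _ _ (allOnes_kronecker_mem h),
      Submodule.smul_mem _ _ (allOnes_kronecker_mem h')⟩
  · obtain ⟨h, h'⟩ := hwo.1.eps_pointFiber_mul_mem_circBlockSpan hu hN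
    rw [one_mul, mul_one]
    exact ⟨allOnes_kronecker_mem h, allOnes_kronecker_mem h'⟩

lemma IsWellOrdering.mul_mem_span_GmatSet' [DecidableEq X] {A : AssocScheme X}
    (hwo : IsWellOrdering B y₀ enum) (x₀ : X) :
    ∀ a ∈ wreathTerw A B x₀ y₀, ∀ m ∈ Submodule.span ℂ (GmatSet' X B enum),
      a * m ∈ Submodule.span ℂ (GmatSet' X B enum) ∧
      m * a ∈ Submodule.span ℂ (GmatSet' X B enum) := by
  have : Nonempty X := ⟨x₀⟩
  rw [span_GmatSet'_eq (Nat.cast_ne_zero.2 Fintype.card_ne_zero)]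
  intro a ha
  refine mul_mem_of_mem_adjoin ?_ ha
  rintro a ha _ ⟨N, hN, rfl⟩
  exact hwo.wreathGens_mul_mem ha hN

lemma IsEnum.Gmat'_mul_Gmat' (hE : IsEnum B y₀ enum) (hX : (Fintype.card X : ℂ) ≠ 0)
    {t t' t'' t''' : Finset (Y × Y)} (ht' : t' ∈ B.rels.erase (diagRel Y))
    (ht''' : t''' ∈ B.rels.erase (diagRel Y)) :
    Gmat' X enum t t' * Gmat' X enum t''' t'' = if t' = t''' then Gmat' X enum t t'' else 0 := by
  simp only [Gmat'_eq, ← mul_kronecker_mul, smul_mul_smul_comm]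
  split_ifs with h
  · subst h
    have h3 : ∑ d, omegaChar d * omegaChar (-d) = 3 := by
      simp [← AddChar.map_add_eq_mul]
    rw [circBlock_mul_circBlock (hE.injective ht'), h3, allOnes_mul_allOnes]
    simp only [smul_kronecker, kronecker_smul, smul_smul]
    congr 1
    field_simp
  · rw [circBlock_mul_circBlock_of_disjoint (hE.enum_ne_enum ht' ht''' h), smul_zero,
      kronecker_zero]

lemma IsEnum.Gmat'_self_ne_zero (hE : IsEnum B y₀ enum) (x : X)
    {t : Finset (Y × Y)} (ht : t ∈ B.rels.erase (diagRel Y)) : Gmat' X enum t t ≠ 0 := by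
  have : Nonempty X := ⟨x⟩
  intro h
  have := congrFun (congrFun h (x, enum t 0)) (x, enum t 0)
  simp [Gmat'_eq, circBlock_apply (hE.injective ht) (hE.injective ht), allOnes] at this

lemma GmatSet'_eq_range :
    GmatSet' X B enum =
      Set.range (Function.uncurry fun t t' : B.rels.erase (diagRel Y) => Gmat' X enum t t') := by
  ext M
  simp [GmatSet', eq_comm]

end GMatrices

section Statements

variable {X Y : Type*} [Fintype X] [DecidableEq X] [Fintype Y] [DecidableEq Y]

theorem stmt12_general (A : AssocScheme X) (B : AssocScheme Y) (x₀ : X) (y₀ : Y)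
    (enum : Finset (Y × Y) → Fin 3 → Y) (hwo : IsWellOrdering B y₀ enum) :
    (∀ a ∈ wreathTerw A B x₀ y₀, ∀ m ∈ Submodule.span ℂ (GmatSet' X B enum),
      a * m ∈ Submodule.span ℂ (GmatSet' X B enum) ∧
      m * a ∈ Submodule.span ℂ (GmatSet' X B enum)) ∧
    (∀ t ∈ B.rels.erase (diagRel Y), ∀ t' ∈ B.rels.erase (diagRel Y),
      ∀ t'' ∈ B.rels.erase (diagRel Y), ∀ t''' ∈ B.rels.erase (diagRel Y),
      Gmat' X enum t t' * Gmat' X enum t''' t'' =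
        if t' = t''' then Gmat' X enum t t'' else 0) ∧
    ∃ φ : Matrix (X × Y) (X × Y) ℂ →ₗ[ℂ]
        Matrix ↥(B.rels.erase (diagRel Y)) ↥(B.rels.erase (diagRel Y)) ℂ,
      (∀ t t' : ↥(B.rels.erase (diagRel Y)),
        φ (Gmat' X enum ↑t ↑t') = Matrix.single t t' 1) ∧
      Set.InjOn φ (Submodule.span ℂ (GmatSet' X B enum)) ∧
      φ '' (Submodule.span ℂ (GmatSet' X B enum)) = Set.univ ∧
      ∀ a ∈ Submodule.span ℂ (GmatSet' X B enum),
        ∀ b ∈ Submodule.span ℂ (GmatSet' X B enum), φ (a * b) = φ a * φ b := by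
  have : Nonempty X := ⟨x₀⟩
  have hX : (Fintype.card X : ℂ) ≠ 0 := Nat.cast_ne_zero.2 Fintype.card_ne_zero
  refine ⟨hwo.mul_mem_span_GmatSet' x₀, fun _ _ _ ht' _ _ _ ht''' =>
    hwo.1.Gmat'_mul_Gmat' hX ht' ht''', ?_⟩
  rw [GmatSet'_eq_range]
  refine exists_linearMap_matrixUnits (fun _ j k _ => ?_) fun t => hwo.1.Gmat'_self_ne_zero x₀ t.2
  simp only [hwo.1.Gmat'_mul_Gmat' hX j.2 k.2, Subtype.ext_iff]

theorem stmt12 (A : AssocScheme X) (B : AssocScheme Y) (h3 : ThreeEquivalenced B)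
    (hT : 2 < B.rels.card) (x₀ : X) (y₀ : Y)
    (enum : Finset (Y × Y) → Fin 3 → Y) (hwo : IsWellOrdering B y₀ enum) :
    (∀ a ∈ wreathTerw A B x₀ y₀, ∀ m ∈ Submodule.span ℂ (GmatSet' X B enum),
      a * m ∈ Submodule.span ℂ (GmatSet' X B enum) ∧
      m * a ∈ Submodule.span ℂ (GmatSet' X B enum)) ∧
    (∀ t ∈ B.rels.erase (diagRel Y), ∀ t' ∈ B.rels.erase (diagRel Y),
      ∀ t'' ∈ B.rels.erase (diagRel Y), ∀ t''' ∈ B.rels.erase (diagRel Y),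
      Gmat' X enum t t' * Gmat' X enum t''' t'' =
        if t' = t''' then Gmat' X enum t t'' else 0) ∧
    ∃ φ : Matrix (X × Y) (X × Y) ℂ →ₗ[ℂ]
        Matrix ↥(B.rels.erase (diagRel Y)) ↥(B.rels.erase (diagRel Y)) ℂ,
      (∀ t t' : ↥(B.rels.erase (diagRel Y)),
        φ (Gmat' X enum ↑t ↑t') = Matrix.single t t' 1) ∧
      Set.InjOn φ (Submodule.span ℂ (GmatSet' X B enum)) ∧
      φ '' (Submodule.span ℂ (GmatSet' X B enum)) = Set.univ ∧
      ∀ a ∈ Submodule.span ℂ (GmatSet' X B enum),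
        ∀ b ∈ Submodule.span ℂ (GmatSet' X B enum), φ (a * b) = φ a * φ b :=
  stmt12_general A B x₀ y₀ enum hwo

end Statements
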